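/- Suppose the system is output controllable in k steps for a set of initial states X_oc(0)\{0}: for each x ∈ X_oc(0)\{0} there is a control sequence U_x(0),…,U_x(k−1) with C A^k x + Σ_{j=0}^{k−1} C A^{k−j−1} B U_x(j) = 0. Let X₁, X₂ be sets such that every x₁ ∈ X₁ can be written x₁ = x + x₂ with x ∈ X_oc(0)\{0} and x₂ ∈ X₂ (and all differences of admissible controls are admissible). Then X₁ is strongly k-ISO with respect to X₂. -/
import Mathlib


open Matrix Set

def traj {n m : ℕ} (A : Matrix (Fin n) (Fin n) ℝ) (B : Matrix (Fin n) (Fin m) ℝ)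
    (x0 : Fin n → ℝ) (u : ℕ → Fin m → ℝ) : ℕ → Fin n → ℝ
  | 0 => x0
  | t + 1 => A.mulVec (traj A B x0 u t) + B.mulVec (u t)

/-- k-step reachable set from X with admissible controls in U. -/
def reach {n m : ℕ} (A : Matrix (Fin n) (Fin n) ℝ) (B : Matrix (Fin n) (Fin m) ℝ)
    (U : Set (Fin m → ℝ)) (k : ℕ) (X : Set (Fin n → ℝ)) : Set (Fin n → ℝ) :=
  {x | ∃ x0 ∈ X, ∃ u : ℕ → Fin m → ℝ, (∀ i, i < k → u i ∈ U) ∧ traj A B x0 u k = x}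

/-- Strong k-initial-state opacity. -/
def strongKISO {n m p : ℕ} (A : Matrix (Fin n) (Fin n) ℝ) (B : Matrix (Fin n) (Fin m) ℝ)
    (U : Set (Fin m → ℝ)) (C : Matrix (Fin p) (Fin n) ℝ) (k : ℕ)
    (Xs Xns : Set (Fin n → ℝ)) : Prop :=
  ∀ xs0 ∈ Xs, ∀ us : ℕ → Fin m → ℝ, (∀ i, i < k → us i ∈ U) →
    ∃ xns0 ∈ Xns, ∃ uns : ℕ → Fin m → ℝ, (∀ i, i < k → uns i ∈ U) ∧
      C.mulVec (traj A B xs0 us k) = C.mulVec (traj A B xns0 uns k)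

/-- Weak k-initial-state opacity. -/
def weakKISO {n m p : ℕ} (A : Matrix (Fin n) (Fin n) ℝ) (B : Matrix (Fin n) (Fin m) ℝ)
    (U : Set (Fin m → ℝ)) (C : Matrix (Fin p) (Fin n) ℝ) (k : ℕ)
    (Xs Xns : Set (Fin n → ℝ)) : Prop :=
  ∃ xs0 ∈ Xs, ∃ us : ℕ → Fin m → ℝ, (∀ i, i < k → us i ∈ U) ∧
    ∃ xns0 ∈ Xns, ∃ uns : ℕ → Fin m → ℝ, (∀ i, i < k → uns i ∈ U) ∧
      C.mulVec (traj A B xs0 us k) = C.mulVec (traj A B xns0 uns k)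

lemma traj_add {n m : ℕ} (A : Matrix (Fin n) (Fin n) ℝ) (B : Matrix (Fin n) (Fin m) ℝ)
    (a b : Fin n → ℝ) (u v : ℕ → Fin m → ℝ) :
    ∀ t, traj A B (a + b) (fun i => u i + v i) t = traj A B a u t + traj A B b v t := by
  intro t
  induction t with
  | zero => rfl
  | succ t ih =>
    simp only [traj, ih, Matrix.mulVec_add]
    abel

theorem stmt_16 {n m p : ℕ} (A : Matrix (Fin n) (Fin n) ℝ) (B : Matrix (Fin n) (Fin m) ℝ)
    (U : Set (Fin m → ℝ)) (C : Matrix (Fin p) (Fin n) ℝ) (k : ℕ)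
    (Xoc X1 X2 : Set (Fin n → ℝ))
    (hoc : ∀ x ∈ Xoc \ {0}, ∃ Ux : ℕ → Fin m → ℝ,
      (∀ i, i < k → Ux i ∈ U) ∧ C.mulVec (traj A B x Ux k) = 0)
    (hdiff : ∀ u v : Fin m → ℝ, u ∈ U → v ∈ U → u - v ∈ U)
    (hdecomp : ∀ x1 ∈ X1, ∃ x ∈ Xoc \ {0}, ∃ x2 ∈ X2, x1 = x + x2) :
    strongKISO A B U C k X1 X2 := by
  intro x1 hx1 u1 hu1
  obtain ⟨x, hx, x2, hx2, rfl⟩ := hdecomp x1 hx1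
  obtain ⟨Ux, hUx, hzero⟩ := hoc x hx
  refine ⟨x2, hx2, fun i => u1 i - Ux i, fun i hi => hdiff _ _ (hu1 i hi) (hUx i hi), ?_⟩
  have h := traj_add A B x x2 Ux (fun i => u1 i - Ux i) k
  have h2 : (fun i => Ux i + (u1 i - Ux i)) = u1 := by funext i; simp
  rw [h2] at h
  rw [h, Matrix.mulVec_add, hzero, zero_add]
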